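/- Let $X$ be a Banach space and $f : [a,b] \to X$ differentiable with Bochner-integrable derivative. Then for every $s \in [a,b]$: $\left\| f(s) - \frac{1}{b-a}\int_a^b f(t)\,dt \right\| \le \left[\frac{1}{2} + \left|\frac{s - \frac{a+b}{2}}{b-a}\right|\right] \int_a^b \|f'(t)\|\,dt$. -/
import Mathlib


open MeasureTheory intervalIntegral

theorem stmt7 {X : Type*} [NormedAddCommGroup X] [NormedSpace ℝ X] [CompleteSpace X]
    {a b : ℝ} (hab : a < b) {f f' : ℝ → X}
    (hderiv : ∀ t ∈ Set.Icc a b, HasDerivAt f (f' t) t)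
    (hint : IntervalIntegrable f' volume a b) {s : ℝ} (hs : s ∈ Set.Icc a b) :
    ‖f s - (b - a)⁻¹ • (∫ t in a..b, f t)‖ ≤
      (1 / 2 + |(s - (a + b) / 2) / (b - a)|) * (∫ t in a..b, ‖f' t‖) := by
  obtain ⟨hs1, hs2⟩ := hs
  have hab' : a ≤ b := hab.le
  have hba : (0:ℝ) < b - a := by linarith
  have hfc : ContinuousOn f (Set.Icc a b) := fun t ht =>
    (hderiv t ht).continuousAt.continuousWithinAt
  have hf_int : IntervalIntegrable f volume a b := hfc.intervalIntegrable_of_Icc hab'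
  have hgc : ContinuousOn (fun t => ‖f s - f t‖) (Set.Icc a b) :=
    (continuousOn_const.sub hfc).norm
  have hg_ab : IntervalIntegrable (fun t => ‖f s - f t‖) volume a b :=
    hgc.intervalIntegrable_of_Icc hab'
  have hg_as : IntervalIntegrable (fun t => ‖f s - f t‖) volume a s :=
    hg_ab.mono_set (by
      rw [Set.uIcc_of_le hs1, Set.uIcc_of_le hab']
      exact Set.Icc_subset_Icc le_rfl hs2)
  have hg_sb : IntervalIntegrable (fun t => ‖f s - f t‖) volume s b :=
    hg_ab.mono_set (by
      rw [Set.uIcc_of_le hs2, Set.uIcc_of_le hab']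
      exact Set.Icc_subset_Icc hs1 le_rfl)
  have hn := hint.norm
  have hnsub : ∀ u v, a ≤ u → u ≤ v → v ≤ b →
      IntervalIntegrable (fun t => ‖f' t‖) volume u v := fun u v hu huv hv =>
    hn.mono_set (by
      rw [Set.uIcc_of_le huv, Set.uIcc_of_le hab']
      exact Set.Icc_subset_Icc hu hv)
  set C1 := ∫ t in a..s, ‖f' t‖ with hC1
  set C2 := ∫ t in s..b, ‖f' t‖ with hC2
  have hC1_nonneg : 0 ≤ C1 := integral_nonneg hs1 (fun t _ => norm_nonneg _)
  have hC2_nonneg : 0 ≤ C2 := integral_nonneg hs2 (fun t _ => norm_nonneg _)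
  have ftc : ∀ u v, a ≤ u → u ≤ v → v ≤ b → f v - f u = ∫ t in u..v, f' t := by
    intro u v hu huv hv
    rw [integral_eq_sub_of_hasDerivAt]
    · intro x hx
      rw [Set.uIcc_of_le huv] at hx
      exact hderiv x ⟨le_trans hu hx.1, le_trans hx.2 hv⟩
    · exact hint.mono_set (by
        rw [Set.uIcc_of_le huv, Set.uIcc_of_le hab']
        exact Set.Icc_subset_Icc hu hv)
  have key1 : ∀ t ∈ Set.Icc a s, ‖f s - f t‖ ≤ C1 := by
    rintro t ⟨ht1, ht2⟩
    rw [ftc t s ht1 ht2 hs2]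
    calc ‖∫ x in t..s, f' x‖ ≤ ∫ x in t..s, ‖f' x‖ := norm_integral_le_integral_norm ht2
    _ ≤ C1 := by
        have hadd : (∫ x in a..t, ‖f' x‖) + ∫ x in t..s, ‖f' x‖ = C1 :=
          integral_add_adjacent_intervals (hnsub a t le_rfl ht1 (ht2.trans hs2))
            (hnsub t s ht1 ht2 hs2)
        have h0 : 0 ≤ ∫ x in a..t, ‖f' x‖ := integral_nonneg ht1 (fun x _ => norm_nonneg _)
        linarith
  have key2 : ∀ t ∈ Set.Icc s b, ‖f s - f t‖ ≤ C2 := by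
    rintro t ⟨ht1, ht2⟩
    rw [norm_sub_rev, ftc s t hs1 ht1 ht2]
    calc ‖∫ x in s..t, f' x‖ ≤ ∫ x in s..t, ‖f' x‖ := norm_integral_le_integral_norm ht1
    _ ≤ C2 := by
        have hadd : (∫ x in s..t, ‖f' x‖) + ∫ x in t..b, ‖f' x‖ = C2 :=
          integral_add_adjacent_intervals (hnsub s t hs1 ht1 ht2)
            (hnsub t b (hs1.trans ht1) ht2 le_rfl)
        have h0 : 0 ≤ ∫ x in t..b, ‖f' x‖ := integral_nonneg ht2 (fun x _ => norm_nonneg _)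
        linarith
  have split_g : (∫ t in a..b, ‖f s - f t‖) =
      (∫ t in a..s, ‖f s - f t‖) + ∫ t in s..b, ‖f s - f t‖ :=
    (integral_add_adjacent_intervals hg_as hg_sb).symm
  have b1 : (∫ t in a..s, ‖f s - f t‖) ≤ (s - a) * C1 := by
    calc (∫ t in a..s, ‖f s - f t‖) ≤ ∫ _ in a..s, C1 :=
          integral_mono_on hs1 hg_as intervalIntegrable_const key1
    _ = (s - a) * C1 := by simp [smul_eq_mul]
  have b2 : (∫ t in s..b, ‖f s - f t‖) ≤ (b - s) * C2 := by
    calc (∫ t in s..b, ‖f s - f t‖) ≤ ∫ _ in s..b, C2 :=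
          integral_mono_on hs2 hg_sb intervalIntegrable_const key2
    _ = (b - s) * C2 := by simp [smul_eq_mul]
  have hrev : f s - (b - a)⁻¹ • (∫ t in a..b, f t) =
      (b - a)⁻¹ • ∫ t in a..b, (f s - f t) := by
    rw [integral_sub intervalIntegrable_const hf_int, intervalIntegral.integral_const, smul_sub, smul_smul,
      inv_mul_cancel₀ hba.ne', one_smul]
  have hinv : (0:ℝ) ≤ (b - a)⁻¹ := inv_nonneg.2 hba.le
  have hsum : C1 + C2 = ∫ t in a..b, ‖f' t‖ :=
    integral_add_adjacent_intervals (hnsub a s le_rfl hs1 hs2) (hnsub s b hs1 hs2 le_rfl)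
  have hmax : (b - a)⁻¹ * max (s - a) (b - s) = 1 / 2 + |(s - (a + b) / 2) / (b - a)| := by
    rw [abs_div, abs_of_pos hba]
    rcases le_total s ((a + b) / 2) with h | h
    · rw [max_eq_right (by linarith), abs_of_nonpos (by linarith)]
      field_simp
      ring
    · rw [max_eq_left (by linarith), abs_of_nonneg (by linarith)]
      field_simp
      ring
  calc ‖f s - (b - a)⁻¹ • (∫ t in a..b, f t)‖
      = (b - a)⁻¹ * ‖∫ t in a..b, (f s - f t)‖ := by
        rw [hrev, norm_smul, Real.norm_eq_abs, abs_of_nonneg hinv]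
    _ ≤ (b - a)⁻¹ * ∫ t in a..b, ‖f s - f t‖ :=
        mul_le_mul_of_nonneg_left (norm_integral_le_integral_norm hab') hinv
    _ ≤ (b - a)⁻¹ * ((s - a) * C1 + (b - s) * C2) := by
        rw [split_g]
        exact mul_le_mul_of_nonneg_left (by linarith) hinv
    _ ≤ (b - a)⁻¹ * (max (s - a) (b - s) * (C1 + C2)) := by
        apply mul_le_mul_of_nonneg_left _ hinv
        have h1 : s - a ≤ max (s - a) (b - s) := le_max_left _ _
        have h2 : b - s ≤ max (s - a) (b - s) := le_max_right _ _
        nlinarith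
    _ = (1 / 2 + |(s - (a + b) / 2) / (b - a)|) * (∫ t in a..b, ‖f' t‖) := by
        rw [← hsum, ← hmax]
        ring
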